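/- arXiv:2103.12267 — 8 statements merged into one kernel-verified Lean document; each statement's English description precedes it below -/
import Mathlib

section
/- Let K be a complex Hilbert space with fundamental symmetry J, [h,k] := ⟨h, J k⟩, let {η_x^1,…,η_x^n}_{x∈M} be a continuous frame of rank n for (K,[·,·]) with frame bounds 0 < a ≤ b, and let S be its frame operator. Then S is bijective with bounded inverse S⁻¹, and the self-adjoint operators S⁻¹∘J and J∘S⁻¹ on the Hilbert space K satisfy b⁻¹·id ≤ S⁻¹∘J ≤ a⁻¹·id and b⁻¹·id ≤ J∘S⁻¹ ≤ a⁻¹·id in the order of self-adjoint operators. -/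
/-!
With `T := J S`, the frame inequalities say that `⟪k, T k⟫` is the real number
`∑ i, ∫ |[η_x^i, k]|² dμ`, squeezed between `a‖k‖²` and `b‖k‖²`; that is, `a ≤ T ≤ b` in the
Loewner order of the C⋆-algebra `K →L[ℂ] K`. Hence `T` is invertible with `b⁻¹ ≤ T⁻¹ ≤ a⁻¹`.
Since `J² = 1`, `S⁻¹ = T⁻¹ J`, so `S⁻¹ J = T⁻¹` and `J S⁻¹ = J T⁻¹ J`, the conjugate of `T⁻¹` by
the self-adjoint involution `J`, which preserves the order and fixes real scalars.
-/

open MeasureTheory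
open scoped InnerProductSpace

lemma Ring.inverse_algebraMap {R A : Type*} [Field R] [Ring A] [Algebra R A] (r : R) :
    Ring.inverse (algebraMap R A r) = algebraMap R A r⁻¹ := by
  rcases eq_or_ne r 0 with rfl | hr
  · simp
  · exact Ring.inverse_unit ((Units.mk0 r hr).map (algebraMap R A).toMonoidHom)

lemma mul_algebraMap_mul_of_mul_self_eq_one {R A : Type*} [CommSemiring R] [Semiring A]
    [Algebra R A] {j : A} (hj : j * j = 1) (r : R) :
    j * algebraMap R A r * j = algebraMap R A r := by
  rw [← Algebra.commutes, mul_assoc, hj, mul_one]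

section StarOrderedRing

variable {A : Type*} [Ring A] [PartialOrder A] [StarRing A] [StarOrderedRing A] [Algebra ℝ A]
  {j t : A}

lemma IsSelfAdjoint.algebraMap_le_conjugate (hj : IsSelfAdjoint j) (hjj : j * j = 1) {r : ℝ}
    (h : algebraMap ℝ A r ≤ t) : algebraMap ℝ A r ≤ j * t * j := by
  simpa only [mul_algebraMap_mul_of_mul_self_eq_one hjj] using hj.conjugate_le_conjugate h

lemma IsSelfAdjoint.conjugate_le_algebraMap (hj : IsSelfAdjoint j) (hjj : j * j = 1) {r : ℝ}
    (h : t ≤ algebraMap ℝ A r) : j * t * j ≤ algebraMap ℝ A r := by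
  simpa only [mul_algebraMap_mul_of_mul_self_eq_one hjj] using hj.conjugate_le_conjugate h

end StarOrderedRing

namespace CStarAlgebra

variable {A : Type*} [CStarAlgebra A] [PartialOrder A] [StarOrderedRing A] {t : A}

lemma algebraMap_inv_le_ringInverse {b : ℝ} (htb : t ≤ algebraMap ℝ A b)
    (ht : IsStrictlyPositive t) : algebraMap ℝ A b⁻¹ ≤ Ring.inverse t := by
  simpa only [Ring.inverse_algebraMap] using ringInverse_le_ringInverse htb ht

lemma ringInverse_le_algebraMap_inv {a : ℝ} (ha : 0 < a) (hat : algebraMap ℝ A a ≤ t) :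
    Ring.inverse t ≤ algebraMap ℝ A a⁻¹ := by
  simpa only [Ring.inverse_algebraMap] using
    ringInverse_le_ringInverse hat (isStrictlyPositive_algebraMap ha)

end CStarAlgebra

namespace ContinuousLinearMap

variable {E : Type*} [NormedAddCommGroup E] [InnerProductSpace ℂ E]

lemma isPositive_of_inner_apply_self_eq_ofReal {T : E →L[ℂ] E} {f : E → ℝ}
    (hT : ∀ x, ⟪x, T x⟫_ℂ = f x) (hf : ∀ x, 0 ≤ f x) : T.IsPositive := by
  refine (isPositive_iff_complex T).2 fun x => ?_
  rw [← inner_conj_symm, hT, Complex.conj_ofReal]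
  simpa using hf x

lemma inner_algebraMap_apply_self (r : ℝ) (x : E) :
    ⟪x, algebraMap ℝ (E →L[ℂ] E) r x⟫_ℂ = ((r * ‖x‖ ^ 2 : ℝ) : ℂ) := by
  simp [Algebra.algebraMap_eq_smul_one, inner_smul_right_eq_smul, inner_self_eq_norm_sq_to_K]

lemma algebraMap_le_of_inner_apply_self_eq_ofReal {T : E →L[ℂ] E} {f : E → ℝ}
    (hT : ∀ x, ⟪x, T x⟫_ℂ = f x) {r : ℝ} (hr : ∀ x, r * ‖x‖ ^ 2 ≤ f x) :
    algebraMap ℝ (E →L[ℂ] E) r ≤ T :=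
  isPositive_of_inner_apply_self_eq_ofReal (f := fun x => f x - r * ‖x‖ ^ 2)
    (fun x => by rw [sub_apply, inner_sub_right, hT, inner_algebraMap_apply_self]; push_cast; rfl)
    (fun x => sub_nonneg.2 (hr x))

lemma le_algebraMap_of_inner_apply_self_eq_ofReal {T : E →L[ℂ] E} {f : E → ℝ}
    (hT : ∀ x, ⟪x, T x⟫_ℂ = f x) {r : ℝ} (hr : ∀ x, f x ≤ r * ‖x‖ ^ 2) :
    T ≤ algebraMap ℝ (E →L[ℂ] E) r :=
  isPositive_of_inner_apply_self_eq_ofReal (f := fun x => r * ‖x‖ ^ 2 - f x)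
    (fun x => by rw [sub_apply, inner_sub_right, hT, inner_algebraMap_apply_self]; push_cast; rfl)
    (fun x => sub_nonneg.2 (hr x))

lemma ofReal_inv_smul_one (r : ℝ) :
    ((r : ℂ)⁻¹ • (1 : E →L[ℂ] E)) = algebraMap ℝ (E →L[ℂ] E) r⁻¹ := by
  rw [Algebra.algebraMap_eq_smul_one, ← Complex.ofReal_inv, Complex.coe_smul]

end ContinuousLinearMap

lemma inner_symmetry_frameOperator_apply_self
    {K : Type*} [NormedAddCommGroup K] [InnerProductSpace ℂ K] [CompleteSpace K]
    {J : K →L[ℂ] K} (hJ : IsSelfAdjoint J) {M : Type*} [MeasurableSpace M] {μ : Measure M}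
    {ι : Type*} [Fintype ι] {η : ι → M → K} {S : K →L[ℂ] K}
    (hS : ∀ k₁ k₂ : K,
      ⟪k₁, J (S k₂)⟫_ℂ = ∑ i, ∫ x, ⟪k₁, J (η i x)⟫_ℂ * ⟪η i x, J k₂⟫_ℂ ∂μ) (k : K) :
    ⟪k, J (S k)⟫_ℂ = ((∑ i, ∫ x, ‖⟪η i x, J k⟫_ℂ‖ ^ 2 ∂μ : ℝ) : ℂ) := by
  rw [hS k k, Complex.ofReal_sum]
  refine Finset.sum_congr rfl fun i _ => ?_
  rw [← integral_complex_ofReal]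
  congr 1 with x
  have hJ_symm : ⟪k, J (η i x)⟫_ℂ = ⟪J k, η i x⟫_ℂ := (hJ.isSymmetric k (η i x)).symm
  rw [hJ_symm, ← inner_conj_symm, RCLike.conj_mul]
  norm_cast

theorem frameOperator_invertible_general
    {K : Type*} [NormedAddCommGroup K] [InnerProductSpace ℂ K] [CompleteSpace K]
    (J : K →L[ℂ] K) (hJsa : IsSelfAdjoint J) (hJ2 : ∀ k : K, J (J k) = k)
    {M : Type*} [MeasurableSpace M] (μ : Measure M)
    (n : ℕ) (η : Fin n → M → K)
    (a b : ℝ) (ha : 0 < a)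
    (hframe : ∀ k : K,
      a * ‖k‖ ^ 2 ≤ ∑ i : Fin n, ∫ x, ‖⟪η i x, J k⟫_ℂ‖ ^ 2 ∂μ ∧
      ∑ i : Fin n, ∫ x, ‖⟪η i x, J k⟫_ℂ‖ ^ 2 ∂μ ≤ b * ‖k‖ ^ 2)
    (S : K →L[ℂ] K)
    (hS : ∀ k₁ k₂ : K,
      ⟪k₁, J (S k₂)⟫_ℂ = ∑ i : Fin n, ∫ x, ⟪k₁, J (η i x)⟫_ℂ * ⟪η i x, J k₂⟫_ℂ ∂μ) :
    Function.Bijective S ∧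
    ∃ Sinv : K →L[ℂ] K, S ∘L Sinv = 1 ∧ Sinv ∘L S = 1 ∧
      IsSelfAdjoint (Sinv ∘L J) ∧ IsSelfAdjoint (J ∘L Sinv) ∧
      (Sinv ∘L J - (b⁻¹ : ℂ) • (1 : K →L[ℂ] K)).IsPositive ∧
      ((a⁻¹ : ℂ) • (1 : K →L[ℂ] K) - Sinv ∘L J).IsPositive ∧
      (J ∘L Sinv - (b⁻¹ : ℂ) • (1 : K →L[ℂ] K)).IsPositive ∧
      ((a⁻¹ : ℂ) • (1 : K →L[ℂ] K) - J ∘L Sinv).IsPositive := by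
  have hJJ : J * J = 1 := ContinuousLinearMap.ext hJ2
  have hT := inner_symmetry_frameOperator_apply_self hJsa hS
  set T := J * S
  have hT_lower : algebraMap ℝ (K →L[ℂ] K) a ≤ T :=
    ContinuousLinearMap.algebraMap_le_of_inner_apply_self_eq_ofReal hT fun k => (hframe k).1
  have hT_upper : T ≤ algebraMap ℝ (K →L[ℂ] K) b :=
    ContinuousLinearMap.le_algebraMap_of_inner_apply_self_eq_ofReal hT fun k => (hframe k).2
  have hT_pos : IsStrictlyPositive T := (isStrictlyPositive_algebraMap ha).of_le hT_lower
  have hTinv_lower := CStarAlgebra.algebraMap_inv_le_ringInverse hT_upper hT_pos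
  have hTinv_upper := CStarAlgebra.ringInverse_le_algebraMap_inv ha hT_lower
  set Sinv := Ring.inverse T * J
  have hS_eq : S = J * T := by rw [← mul_assoc, hJJ, one_mul]
  have hS_Sinv : S * Sinv = 1 := by
    rw [hS_eq, mul_assoc, Ring.mul_inverse_cancel_left _ _ hT_pos.isUnit, hJJ]
  have hSinv_S : Sinv * S = 1 := by
    rw [hS_eq, mul_assoc, ← mul_assoc J, hJJ, one_mul, Ring.inverse_mul_cancel _ hT_pos.isUnit]
  have hSinv_J : Sinv * J = Ring.inverse T := by rw [mul_assoc, hJJ, mul_one]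
  have hJ_Sinv : J * Sinv = J * Ring.inverse T * J := (mul_assoc _ _ _).symm
  refine ⟨Function.bijective_iff_has_inverse.2 ⟨Sinv, fun k => congr($hSinv_S k),
    fun k => congr($hS_Sinv k)⟩, Sinv, hS_Sinv, hSinv_S, ?_, ?_, ?_, ?_, ?_, ?_⟩
  all_goals simp only [← ContinuousLinearMap.mul_def, ← ContinuousLinearMap.le_def,
    ContinuousLinearMap.ofReal_inv_smul_one, hSinv_J, hJ_Sinv]
  · exact hT_pos.isSelfAdjoint.ringInverse
  · exact hT_pos.isSelfAdjoint.ringInverse.conjugate_self hJsa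
  · exact hTinv_lower
  · exact hTinv_upper
  · exact hJsa.algebraMap_le_conjugate hJJ hTinv_lower
  · exact hJsa.conjugate_le_algebraMap hJJ hTinv_upper

/-- The frame operator `S` of a continuous frame of rank `n` for a Krein
space `(K, [·,·])`, `[h,k] = ⟪h, J k⟫_ℂ`, with frame bounds `0 < a ≤ b`, is bijective with
bounded inverse `S⁻¹`, and the self-adjoint operators `S⁻¹∘J` and `J∘S⁻¹` satisfy
`b⁻¹·1 ≤ S⁻¹∘J ≤ a⁻¹·1` and `b⁻¹·1 ≤ J∘S⁻¹ ≤ a⁻¹·1`. -/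
theorem frameOperator_invertible
    {K : Type*} [NormedAddCommGroup K] [InnerProductSpace ℂ K] [CompleteSpace K]
    (J : K →L[ℂ] K) (hJsa : IsSelfAdjoint J) (hJ2 : ∀ k : K, J (J k) = k)
    {M : Type*} [MeasurableSpace M] (μ : Measure M)
    (n : ℕ) (η : Fin n → M → K)
    (hmeas : ∀ (i : Fin n) (k : K), Measurable fun x : M => ⟪η i x, k⟫_ℂ)
    (a b : ℝ) (ha : 0 < a) (hab : a ≤ b)
    (hframe : ∀ k : K,
      a * ‖k‖ ^ 2 ≤ ∑ i : Fin n, ∫ x, ‖⟪η i x, J k⟫_ℂ‖ ^ 2 ∂μ ∧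
      ∑ i : Fin n, ∫ x, ‖⟪η i x, J k⟫_ℂ‖ ^ 2 ∂μ ≤ b * ‖k‖ ^ 2)
    (S : K →L[ℂ] K)
    (hS : ∀ k₁ k₂ : K,
      ⟪k₁, J (S k₂)⟫_ℂ = ∑ i : Fin n, ∫ x, ⟪k₁, J (η i x)⟫_ℂ * ⟪η i x, J k₂⟫_ℂ ∂μ) :
    Function.Bijective S ∧
    ∃ Sinv : K →L[ℂ] K, S ∘L Sinv = 1 ∧ Sinv ∘L S = 1 ∧
      IsSelfAdjoint (Sinv ∘L J) ∧ IsSelfAdjoint (J ∘L Sinv) ∧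
      (Sinv ∘L J - (b⁻¹ : ℂ) • (1 : K →L[ℂ] K)).IsPositive ∧
      ((a⁻¹ : ℂ) • (1 : K →L[ℂ] K) - Sinv ∘L J).IsPositive ∧
      (J ∘L Sinv - (b⁻¹ : ℂ) • (1 : K →L[ℂ] K)).IsPositive ∧
      ((a⁻¹ : ℂ) • (1 : K →L[ℂ] K) - J ∘L Sinv).IsPositive :=
  frameOperator_invertible_general J hJsa hJ2 μ n η a b ha hframe S hS
end

section
/- (Frame decomposition) Let K be a complex Hilbert space with fundamental symmetry J, [h,k] := ⟨h, J k⟩, let {η_x^1,…,η_x^n}_{x∈M} be a continuous frame of rank n for (K,[·,·]) with respect to a measure space (M,𝔅,μ), and let S be its frame operator (which is bijective with bounded inverse). Then for all h, k ∈ K: [h, k] = ∑_{i=1}^n ∫_M [η_x^i, k] · [h, S⁻¹ η_x^i] dμ(x) and [h, k] = ∑_{i=1}^n ∫_M [S⁻¹ η_x^i, k] · [h, η_x^i] dμ(x); equivalently, the identity operator equals the weak integrals ∑_i ∫_M |η_x^i][S⁻¹η_x^i| dμ and ∑_i ∫_M |S⁻¹η_x^i][η_x^i| dμ. -/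
/-!
The frame operator is symmetric for the Krein form: conjugating the integral formula for
`[y, S x]` termwise gives the one for `[x, S y]`. Hence so is its inverse, and then
`[h, k] = [S S⁻¹ h, k] = [S⁻¹ h, S k]` (resp. `[h, S S⁻¹ k]`) expands, via the defining
formula of `S`, into the two decompositions.
-/

open MeasureTheory
open scoped InnerProductSpace

section KreinSymmetric

variable {K : Type*} [NormedAddCommGroup K] [InnerProductSpace ℂ K] {J : K →L[ℂ] K}

theorem inner_frameOperator_symm [CompleteSpace K] {M : Type*} [MeasurableSpace M]
    {μ : Measure M} {n : ℕ} {η : Fin n → M → K} {S : K →L[ℂ] K} (hJ : IsSelfAdjoint J)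
    (hS : ∀ k₁ k₂ : K,
      ⟪k₁, J (S k₂)⟫_ℂ = ∑ i : Fin n, ∫ x, ⟪k₁, J (η i x)⟫_ℂ * ⟪η i x, J k₂⟫_ℂ ∂μ)
    (x y : K) : ⟪S x, J y⟫_ℂ = ⟪x, J (S y)⟫_ℂ := by
  have hsymm : ∀ u v : K, ⟪u, J v⟫_ℂ = starRingEnd ℂ ⟪v, J u⟫_ℂ := fun u v => by
    rw [inner_conj_symm]; exact (hJ.isSymmetric u v).symm
  rw [hsymm, hS y x, hS x y, map_sum]
  refine Finset.sum_congr rfl fun i _ => ?_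
  rw [← integral_conj]
  congr 1 with z
  rw [map_mul, ← hsymm, ← hsymm, mul_comm]

theorem inner_rightInverse_symm {T Tinv : K → K}
    (hTsymm : ∀ x y : K, ⟪T x, J y⟫_ℂ = ⟪x, J (T y)⟫_ℂ) (hTinv : Function.RightInverse Tinv T)
    (x y : K) : ⟪x, J (Tinv y)⟫_ℂ = ⟪Tinv x, J y⟫_ℂ := by
  calc ⟪x, J (Tinv y)⟫_ℂ = ⟪T (Tinv x), J (Tinv y)⟫_ℂ := by rw [hTinv]
    _ = ⟪Tinv x, J (T (Tinv y))⟫_ℂ := hTsymm _ _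
    _ = ⟪Tinv x, J y⟫_ℂ := by rw [hTinv]

end KreinSymmetric

theorem frame_decomposition_general
    {K : Type*} [NormedAddCommGroup K] [InnerProductSpace ℂ K] [CompleteSpace K]
    (J : K →L[ℂ] K) (hJsa : IsSelfAdjoint J)
    {M : Type*} [MeasurableSpace M] (μ : Measure M)
    (n : ℕ) (η : Fin n → M → K)
    (S : K →L[ℂ] K)
    (hS : ∀ k₁ k₂ : K,
      ⟪k₁, J (S k₂)⟫_ℂ = ∑ i : Fin n, ∫ x, ⟪k₁, J (η i x)⟫_ℂ * ⟪η i x, J k₂⟫_ℂ ∂μ)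
    (Sinv : K →L[ℂ] K) (hSinv₁ : S ∘L Sinv = 1) :
    ∀ h k : K,
      ⟪h, J k⟫_ℂ = ∑ i : Fin n, ∫ x, ⟪η i x, J k⟫_ℂ * ⟪h, J (Sinv (η i x))⟫_ℂ ∂μ ∧
      ⟪h, J k⟫_ℂ = ∑ i : Fin n, ∫ x, ⟪Sinv (η i x), J k⟫_ℂ * ⟪h, J (η i x)⟫_ℂ ∂μ := by
  intro h k
  have hSS : Function.RightInverse Sinv S := fun z => by
    simpa using DFunLike.congr_fun hSinv₁ z
  have hSsymm := inner_frameOperator_symm hJsa hS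
  have hSinvSymm := inner_rightInverse_symm hSsymm hSS
  constructor
  · simp_rw [hSinvSymm h, mul_comm ⟪η _ _, J k⟫_ℂ]
    rw [← hS, ← hSsymm, hSS]
  · simp_rw [← hSinvSymm _ k, mul_comm ⟪_, J (Sinv k)⟫_ℂ]
    rw [← hS, hSS]

/-- **Frame decomposition.** If `S` is the frame operator of a continuous
frame of rank `n` for the Krein space `(K, [·,·])`, `[h,k] = ⟪h, J k⟫_ℂ`, and `S⁻¹` is its
bounded inverse, then for all `h, k ∈ K` one has
`[h,k] = ∑_i ∫ [η_x^i, k]·[h, S⁻¹η_x^i] dμ = ∑_i ∫ [S⁻¹η_x^i, k]·[h, η_x^i] dμ`,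
i.e. the identity is the weak integral `∑_i ∫ |η_x^i][S⁻¹η_x^i| dμ = ∑_i ∫ |S⁻¹η_x^i][η_x^i| dμ`. -/
theorem frame_decomposition
    {K : Type*} [NormedAddCommGroup K] [InnerProductSpace ℂ K] [CompleteSpace K]
    (J : K →L[ℂ] K) (hJsa : IsSelfAdjoint J) (hJ2 : ∀ k : K, J (J k) = k)
    {M : Type*} [MeasurableSpace M] (μ : Measure M)
    (n : ℕ) (η : Fin n → M → K)
    (hmeas : ∀ (i : Fin n) (k : K), Measurable fun x : M => ⟪η i x, k⟫_ℂ)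
    (a b : ℝ) (ha : 0 < a) (hab : a ≤ b)
    (hframe : ∀ k : K,
      a * ‖k‖ ^ 2 ≤ ∑ i : Fin n, ∫ x, ‖⟪η i x, J k⟫_ℂ‖ ^ 2 ∂μ ∧
      ∑ i : Fin n, ∫ x, ‖⟪η i x, J k⟫_ℂ‖ ^ 2 ∂μ ≤ b * ‖k‖ ^ 2)
    (S : K →L[ℂ] K)
    (hS : ∀ k₁ k₂ : K,
      ⟪k₁, J (S k₂)⟫_ℂ = ∑ i : Fin n, ∫ x, ⟪k₁, J (η i x)⟫_ℂ * ⟪η i x, J k₂⟫_ℂ ∂μ)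
    (Sinv : K →L[ℂ] K) (hSinv₁ : S ∘L Sinv = 1) (hSinv₂ : Sinv ∘L S = 1) :
    ∀ h k : K,
      ⟪h, J k⟫_ℂ = ∑ i : Fin n, ∫ x, ⟪η i x, J k⟫_ℂ * ⟪h, J (Sinv (η i x))⟫_ℂ ∂μ ∧
      ⟪h, J k⟫_ℂ = ∑ i : Fin n, ∫ x, ⟪Sinv (η i x), J k⟫_ℂ * ⟪h, J (η i x)⟫_ℂ ∂μ :=
  frame_decomposition_general J hJsa μ n η S hS Sinv hSinv₁
end

section
/- Let K be a complex Hilbert space with fundamental symmetry J, [h,k] := ⟨h, J k⟩, let (M,𝔅,μ) be a measure space, and let η^i : M → K, i=1,…,n, be weakly measurable maps such that the function x ↦ [η_x^i, k] belongs to L²(M,μ) for every k ∈ K and every i, and such that the analysis operator T : K → ⊕_{i=1}^n L²(M,μ), (T k)_i(x) = [η_x^i, k], is a bounded linear operator. Then {η_x^1,…,η_x^n}_{x∈M} is a continuous frame of rank n for (K,[·,·]) (i.e. there exist 0 < a ≤ b with a‖k‖² ≤ ∑_{i=1}^n ∫_M |[η_x^i,k]|² dμ(x) ≤ b‖k‖²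 for all k) if and only if the Hilbert-space adjoint T* : ⊕_{i=1}^n L²(M,μ) → K of T is surjective. -/
/-! By Parseval in `⊕ L²(M, μ)`, the frame inequality says `a ‖k‖² ≤ ‖T k‖² ≤ b ‖k‖²`. The upper
bound is free since `T` is bounded, and a Hilbert space operator is bounded below iff its adjoint
is onto: if `a ‖k‖² ≤ ‖T k‖² = re ⟪T* T k, k⟫`, then `T* T` is coercive, hence invertible;
conversely the open mapping theorem gives every `k` a preimage `T* u` with `‖u‖ ≤ C ‖k‖`, so that
`‖k‖² = re ⟪u, T k⟫ ≤ C ‖k‖ ‖T k‖`. -/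

open MeasureTheory
open scoped InnerProductSpace ENNReal

noncomputable instance piLp_completeSpace {ι : Type*} (p : ℝ≥0∞) (E : ι → Type*)
    [∀ i, UniformSpace (E i)] [∀ i, CompleteSpace (E i)] : CompleteSpace (PiLp p E) :=
  (PiLp.uniformEquiv p E).completeSpace_iff.2 (Pi.complete E)

theorem MeasureTheory.L2.norm_sq_eq_integral_norm_sq {𝕜 α E : Type*} [RCLike 𝕜]
    [MeasurableSpace α] {μ : Measure α} [NormedAddCommGroup E] [InnerProductSpace 𝕜 E]
    (f : α →₂[μ] E) : ‖f‖ ^ 2 = ∫ x, ‖f x‖ ^ 2 ∂μ := by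
  have h := (inner_self_eq_norm_sq_to_K (𝕜 := 𝕜) f).symm
  simp_rw [L2.inner_def, inner_self_eq_norm_sq_to_K (𝕜 := 𝕜), ← RCLike.ofReal_pow,
    integral_ofReal] at h
  exact_mod_cast h

namespace ContinuousLinearMap

theorem exists_sq_bounds_iff_exists_sq_lower_bound {𝕜 E F : Type*} [NontriviallyNormedField 𝕜]
    [SeminormedAddCommGroup E] [NormedSpace 𝕜 E] [SeminormedAddCommGroup F] [NormedSpace 𝕜 F]
    (T : E →L[𝕜] F) :
    (∃ a b : ℝ, 0 < a ∧ a ≤ b ∧ ∀ x, a * ‖x‖ ^ 2 ≤ ‖T x‖ ^ 2 ∧ ‖T x‖ ^ 2 ≤ b * ‖x‖ ^ 2) ↔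
      ∃ a : ℝ, 0 < a ∧ ∀ x, a * ‖x‖ ^ 2 ≤ ‖T x‖ ^ 2 := by
  refine ⟨fun ⟨a, _, ha, _, h⟩ => ⟨a, ha, fun x => (h x).1⟩, fun ⟨a, ha, h⟩ => ?_⟩
  refine ⟨a, max a (‖T‖ ^ 2), ha, le_max_left _ _, fun x => ⟨h x, ?_⟩⟩
  calc ‖T x‖ ^ 2 ≤ (‖T‖ * ‖x‖) ^ 2 := by gcongr; exact T.le_opNorm x
    _ = ‖T‖ ^ 2 * ‖x‖ ^ 2 := mul_pow _ _ _
    _ ≤ max a (‖T‖ ^ 2) * ‖x‖ ^ 2 := by gcongr; exact le_max_right _ _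

variable {𝕜 E F : Type*} [RCLike 𝕜] [NormedAddCommGroup E] [InnerProductSpace 𝕜 E]
  [CompleteSpace E] [NormedAddCommGroup F] [InnerProductSpace 𝕜 F] [CompleteSpace F]

theorem surjective_adjoint_of_sq_norm_le {T : E →L[𝕜] F} {a : ℝ} (ha : 0 < a)
    (h : ∀ x, a * ‖x‖ ^ 2 ≤ ‖T x‖ ^ 2) : Function.Surjective (adjoint T) := by
  have hunit : IsUnit (adjoint T ∘L T) :=
    isUnit_of_forall_le_norm_inner_map _ (Real.toNNReal_pos.2 ha) fun x => by
      rw [comp_apply, adjoint_inner_left, inner_self_eq_norm_sq_to_K, Real.coe_toNNReal _ ha.le]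
      norm_cast
      simpa [mul_comm] using h x
  exact .of_comp (isUnit_iff_bijective.1 hunit).2

theorem exists_sq_norm_le_of_surjective_adjoint {T : E →L[𝕜] F}
    (hT : Function.Surjective (adjoint T)) : ∃ a : ℝ, 0 < a ∧ ∀ x, a * ‖x‖ ^ 2 ≤ ‖T x‖ ^ 2 := by
  obtain ⟨C, hC, hpre⟩ := (adjoint T).exists_preimage_norm_le hT
  refine ⟨(C ^ 2)⁻¹, by positivity, fun x => ?_⟩
  obtain ⟨y, rfl, hy⟩ := hpre x
  set x := adjoint T y
  have hx : ‖x‖ * ‖x‖ ≤ ‖x‖ * (C * ‖T x‖) :=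
    calc ‖x‖ * ‖x‖ = RCLike.re ⟪y, T x⟫_𝕜 := by
          rw [← adjoint_inner_left, inner_self_eq_norm_sq, sq]
      _ ≤ ‖y‖ * ‖T x‖ := re_inner_le_norm _ _
      _ ≤ C * ‖x‖ * ‖T x‖ := by gcongr
      _ = ‖x‖ * (C * ‖T x‖) := by ring
  rw [inv_mul_le_iff₀ (by positivity), ← mul_pow]
  rcases (norm_nonneg x).eq_or_lt with hx0 | hpos
  · rw [← hx0, zero_pow two_ne_zero]; positivity
  · gcongr
    exact le_of_mul_le_mul_left hx hpos

theorem surjective_adjoint_iff_exists_sq_norm_le (T : E →L[𝕜] F) :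
    Function.Surjective (adjoint T) ↔ ∃ a : ℝ, 0 < a ∧ ∀ x, a * ‖x‖ ^ 2 ≤ ‖T x‖ ^ 2 :=
  ⟨exists_sq_norm_le_of_surjective_adjoint,
    fun ⟨_, ha, h⟩ => surjective_adjoint_of_sq_norm_le ha h⟩

end ContinuousLinearMap

theorem continuousFrame_iff_preFrame_surjective_general
    {K : Type*} [NormedAddCommGroup K] [InnerProductSpace ℂ K] [CompleteSpace K]
    (J : K →L[ℂ] K)
    {M : Type*} [MeasurableSpace M] (μ : Measure M)
    (n : ℕ) (η : Fin n → M → K)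
    (T : K →L[ℂ] PiLp 2 fun _ : Fin n => Lp ℂ 2 μ)
    (hT : ∀ (k : K) (i : Fin n), (T k i : M → ℂ) =ᵐ[μ] fun x : M => ⟪η i x, J k⟫_ℂ) :
    (∃ a b : ℝ, 0 < a ∧ a ≤ b ∧ ∀ k : K,
        a * ‖k‖ ^ 2 ≤ ∑ i : Fin n, ∫ x, ‖⟪η i x, J k⟫_ℂ‖ ^ 2 ∂μ ∧
        ∑ i : Fin n, ∫ x, ‖⟪η i x, J k⟫_ℂ‖ ^ 2 ∂μ ≤ b * ‖k‖ ^ 2) ↔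
      Function.Surjective (ContinuousLinearMap.adjoint T) := by
  have hnorm : ∀ k, ∑ i : Fin n, ∫ x, ‖⟪η i x, J k⟫_ℂ‖ ^ 2 ∂μ = ‖T k‖ ^ 2 := fun k => by
    rw [PiLp.norm_sq_eq_of_L2]
    refine Finset.sum_congr rfl fun i _ => ?_
    rw [L2.norm_sq_eq_integral_norm_sq (𝕜 := ℂ)]
    exact integral_congr_ae ((hT k i).mono fun x hx => by simp only [hx])
  simp only [hnorm]
  rw [T.surjective_adjoint_iff_exists_sq_norm_le]
  exact T.exists_sq_bounds_iff_exists_sq_lower_bound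

/-- A weakly measurable family whose analysis transform lands in
`⊕_{i=1}^n L²(M,μ)` and whose analysis operator `T` is bounded is a continuous frame of
rank `n` for the Krein space `(K, [·,·])`, `[h,k] = ⟪h, J k⟫_ℂ`, if and only if the
Hilbert space adjoint `T*` (the pre-frame operator) is surjective. -/
theorem continuousFrame_iff_preFrame_surjective
    {K : Type*} [NormedAddCommGroup K] [InnerProductSpace ℂ K] [CompleteSpace K]
    (J : K →L[ℂ] K) (hJsa : IsSelfAdjoint J) (hJ2 : ∀ k : K, J (J k) = k)
    {M : Type*} [MeasurableSpace M] (μ : Measure M)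
    (n : ℕ) (η : Fin n → M → K)
    (hmeas : ∀ (i : Fin n) (k : K), Measurable fun x : M => ⟪η i x, k⟫_ℂ)
    (hL2 : ∀ (i : Fin n) (k : K), MemLp (fun x : M => ⟪η i x, J k⟫_ℂ) 2 μ)
    (T : K →L[ℂ] PiLp 2 fun _ : Fin n => Lp ℂ 2 μ)
    (hT : ∀ (k : K) (i : Fin n), (T k i : M → ℂ) =ᵐ[μ] fun x : M => ⟪η i x, J k⟫_ℂ) :
    (∃ a b : ℝ, 0 < a ∧ a ≤ b ∧ ∀ k : K,
        a * ‖k‖ ^ 2 ≤ ∑ i : Fin n, ∫ x, ‖⟪η i x, J k⟫_ℂ‖ ^ 2 ∂μ ∧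
        ∑ i : Fin n, ∫ x, ‖⟪η i x, J k⟫_ℂ‖ ^ 2 ∂μ ≤ b * ‖k‖ ^ 2) ↔
      Function.Surjective (ContinuousLinearMap.adjoint T) :=
  continuousFrame_iff_preFrame_surjective_general J μ n η T hT
end

section
/- Let K be a complex Hilbert space with fundamental symmetry J, [h,k] := ⟨h, J k⟩, let (M₀,𝔅₀,μ₀) be a finite positive measure space, and let {η_x^1,…,η_x^n}_{x∈M₀} be a continuous frame of rank n for (K,[·,·]) with respect to μ₀ with frame bounds 0 < a ≤ b. On M := M₀ × {-1, +1} equip the product σ-algebra with the product measure μ of μ₀ and the counting measure on {-1,+1}, and set η_{(x,p)}^i := η_x^i. Then: (1) {η_{(x,p)}^1,…,η_{(x,p)}^n}_{(x,p)∈M} is a continuous frame of rank n for (K,[·,·]) with respect to (M, μ) with frame bounds 2a ≤ 2b; (2) for all h, k ∈ K: ∑_{i=1}^n ∫_M p · [η_{(x,p)}^i, k] · [h, η_{(x,p)}^i] dμ((x,p)) = 0; in particular the operator 𝒮 = T* T (the pre-frame operator composed with the analysis operator, defined with respect to the signed measure with sign p) is the zero operator and is not invertible. -/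
open MeasureTheory
open scoped InnerProductSpace

/-! Both integrands factor through the projections of `M₀ × Bool`: the frame integrand depends
on `x` only, so integrating over the counting measure on `Bool` doubles it, while the signed
integrand is a function of `x` times the sign `p`, whose counting integral is `1 - 1 = 0`.
Since `J` is injective, a vanishing form `[h, 𝒮 k]` forces `𝒮 = 0`. -/

section ProdCountBool

variable {α : Type*} [MeasurableSpace α] (μ : Measure α) [SFinite μ]

theorem integral_prod_count_bool_comp_fst {E : Type*} [NormedAddCommGroup E] [NormedSpace ℝ E]
    (f : α → E) :
    ∫ y : α × Bool, f y.1 ∂μ.prod (Measure.count : Measure Bool) = (2 : ℝ) • ∫ x, f x ∂μ := by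
  rw [integral_fun_fst, Measure.count_real_univ]
  simp

theorem integral_prod_count_bool_sign_mul {𝕜 : Type*} [RCLike 𝕜] (f : α → 𝕜) :
    ∫ y : α × Bool, (if y.2 then (1 : 𝕜) else -1) * f y.1
      ∂μ.prod (Measure.count : Measure Bool) = 0 := by
  simp_rw [mul_comm _ (f _)]
  rw [integral_prod_mul f fun p : Bool => if p then (1 : 𝕜) else -1]
  simp [integral_count]

end ProdCountBool

theorem ContinuousLinearMap.eq_zero_of_forall_inner_comp_eq_zero {𝕜 E : Type*} [RCLike 𝕜]
    [NormedAddCommGroup E] [InnerProductSpace 𝕜 E] {J S : E →L[𝕜] E}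
    (hJ : Function.Injective J) (h : ∀ u v, ⟪u, J (S v)⟫_𝕜 = 0) : S = 0 := by
  ext v
  refine hJ ?_
  rw [zero_apply, map_zero]
  exact ext_inner_left 𝕜 fun u => by rw [h, inner_zero_right]

theorem signed_measure_frame_operator_zero_general
    {K : Type*} [NormedAddCommGroup K] [InnerProductSpace ℂ K]
    [Nontrivial K]
    (J : K →L[ℂ] K) (hJ2 : ∀ k : K, J (J k) = k)
    {M₀ : Type*} [MeasurableSpace M₀] (μ₀ : Measure M₀) [IsFiniteMeasure μ₀]
    (n : ℕ) (η : Fin n → M₀ → K)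
    (a b : ℝ)
    (hframe : ∀ k : K,
      a * ‖k‖ ^ 2 ≤ ∑ i : Fin n, ∫ x, ‖⟪η i x, J k⟫_ℂ‖ ^ 2 ∂μ₀ ∧
      ∑ i : Fin n, ∫ x, ‖⟪η i x, J k⟫_ℂ‖ ^ 2 ∂μ₀ ≤ b * ‖k‖ ^ 2) :
    (∀ k : K,
      2 * a * ‖k‖ ^ 2 ≤
        ∑ i : Fin n, ∫ y : M₀ × Bool, ‖⟪η i y.1, J k⟫_ℂ‖ ^ 2
          ∂(μ₀.prod (Measure.count : Measure Bool)) ∧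
      ∑ i : Fin n, ∫ y : M₀ × Bool, ‖⟪η i y.1, J k⟫_ℂ‖ ^ 2
          ∂(μ₀.prod (Measure.count : Measure Bool)) ≤ 2 * b * ‖k‖ ^ 2) ∧
    (∀ h k : K,
      ∑ i : Fin n, ∫ y : M₀ × Bool,
          (if y.2 then (1 : ℂ) else -1) * ⟪η i y.1, J k⟫_ℂ * ⟪h, J (η i y.1)⟫_ℂ
          ∂(μ₀.prod (Measure.count : Measure Bool)) = 0) ∧
    (∀ S' : K →L[ℂ] K,
      (∀ h k : K,
        ⟪h, J (S' k)⟫_ℂ =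
          ∑ i : Fin n, ∫ y : M₀ × Bool,
            (if y.2 then (1 : ℂ) else -1) * ⟪η i y.1, J k⟫_ℂ * ⟪h, J (η i y.1)⟫_ℂ
            ∂(μ₀.prod (Measure.count : Measure Bool))) →
      S' = 0 ∧ ¬ Function.Bijective S') := by
  have hsigned : ∀ h k : K, ∑ i : Fin n, ∫ y : M₀ × Bool,
      (if y.2 then (1 : ℂ) else -1) * ⟪η i y.1, J k⟫_ℂ * ⟪h, J (η i y.1)⟫_ℂ
      ∂(μ₀.prod (Measure.count : Measure Bool)) = 0 := fun h k =>
    Finset.sum_eq_zero fun i _ => by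
      simp_rw [mul_assoc]
      exact integral_prod_count_bool_sign_mul μ₀ fun x => ⟪η i x, J k⟫_ℂ * ⟪h, J (η i x)⟫_ℂ
  refine ⟨fun k => ?_, hsigned, fun S' hS' => ?_⟩
  · have hdouble : ∀ i, ∫ y : M₀ × Bool, ‖⟪η i y.1, J k⟫_ℂ‖ ^ 2
        ∂(μ₀.prod (Measure.count : Measure Bool)) = 2 * ∫ x, ‖⟪η i x, J k⟫_ℂ‖ ^ 2 ∂μ₀ :=
      fun i => integral_prod_count_bool_comp_fst μ₀ fun x => ‖⟪η i x, J k⟫_ℂ‖ ^ 2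
    simp_rw [hdouble, ← Finset.mul_sum]
    obtain ⟨hlower, hupper⟩ := hframe k
    constructor <;> linarith
  · obtain rfl : S' = 0 := ContinuousLinearMap.eq_zero_of_forall_inner_comp_eq_zero
      (Function.LeftInverse.injective hJ2) fun h k => (hS' h k).trans (hsigned h k)
    exact ⟨rfl, fun hbij => Function.not_injective_const hbij.injective⟩

/-- Starting from a continuous frame of rank `n` for the Krein space
`(K, [·,·])`, `[h,k] = ⟪h, J k⟫_ℂ`, over a finite positive measure space `(M₀, μ₀)`,
duplicate the index set to `M = M₀ × {-1,+1}` (here `{-1,+1}` is modelled by `Bool`,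
`p = true ↦ +1`, `p = false ↦ -1`) with the product of `μ₀` and the counting measure,
and set `η_{(x,p)}^i := η_x^i`.  Then the doubled family is a continuous frame with
bounds `2a ≤ 2b`, yet the sesquilinear form of `𝒮 = T*T` taken with respect to the
signed measure (sign `p`) vanishes identically; hence `𝒮 = 0`, which is not invertible. -/
theorem signed_measure_frame_operator_zero
    {K : Type*} [NormedAddCommGroup K] [InnerProductSpace ℂ K] [CompleteSpace K]
    [Nontrivial K]
    (J : K →L[ℂ] K) (hJsa : IsSelfAdjoint J) (hJ2 : ∀ k : K, J (J k) = k)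
    {M₀ : Type*} [MeasurableSpace M₀] (μ₀ : Measure M₀) [IsFiniteMeasure μ₀]
    (n : ℕ) (η : Fin n → M₀ → K)
    (hmeas : ∀ (i : Fin n) (k : K), Measurable fun x : M₀ => ⟪η i x, k⟫_ℂ)
    (a b : ℝ) (ha : 0 < a) (hab : a ≤ b)
    (hframe : ∀ k : K,
      a * ‖k‖ ^ 2 ≤ ∑ i : Fin n, ∫ x, ‖⟪η i x, J k⟫_ℂ‖ ^ 2 ∂μ₀ ∧
      ∑ i : Fin n, ∫ x, ‖⟪η i x, J k⟫_ℂ‖ ^ 2 ∂μ₀ ≤ b * ‖k‖ ^ 2) :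
    (∀ k : K,
      2 * a * ‖k‖ ^ 2 ≤
        ∑ i : Fin n, ∫ y : M₀ × Bool, ‖⟪η i y.1, J k⟫_ℂ‖ ^ 2
          ∂(μ₀.prod (Measure.count : Measure Bool)) ∧
      ∑ i : Fin n, ∫ y : M₀ × Bool, ‖⟪η i y.1, J k⟫_ℂ‖ ^ 2
          ∂(μ₀.prod (Measure.count : Measure Bool)) ≤ 2 * b * ‖k‖ ^ 2) ∧
    (∀ h k : K,
      ∑ i : Fin n, ∫ y : M₀ × Bool,
          (if y.2 then (1 : ℂ) else -1) * ⟪η i y.1, J k⟫_ℂ * ⟪h, J (η i y.1)⟫_ℂ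
          ∂(μ₀.prod (Measure.count : Measure Bool)) = 0) ∧
    (∀ S' : K →L[ℂ] K,
      (∀ h k : K,
        ⟪h, J (S' k)⟫_ℂ =
          ∑ i : Fin n, ∫ y : M₀ × Bool,
            (if y.2 then (1 : ℂ) else -1) * ⟪η i y.1, J k⟫_ℂ * ⟪h, J (η i y.1)⟫_ℂ
            ∂(μ₀.prod (Measure.count : Measure Bool))) →
      S' = 0 ∧ ¬ Function.Bijective S') :=
  signed_measure_frame_operator_zero_general J hJ2 μ₀ n η a b hframe
end

section
/- Let K be a complex Hilbert space with fundamental symmetry J, [h,k] := ⟨h, J k⟩, let {η_x^1,…,η_x^n}_{x∈M} be a continuous frame of rank n for (K,[·,·]) with frame bounds 0 < a ≤ b and frame operator S. Then S∘J and J∘S are positive invertible self-adjoint operators on the Hilbert space K; letting R denote the positive square root of S∘J and Q the positive square root of J∘S (both invertible), the families {R⁻¹η_x^1,…,R⁻¹η_x^n}_{x∈M} and {Q⁻¹Jη_x^1,…,Q⁻¹Jη_x^n}_{x∈M} are Parseval continuous frames of rank n for (K,[·,·]): for all k ∈ K, ∑_{i=1}^n ∫_M |[R⁻¹η_x^i,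 k]|² dμ(x) = ‖k‖² and ∑_{i=1}^n ∫_M |[Q⁻¹Jη_x^i, k]|² dμ(x) = ‖k‖². -/
/-! The Krein frame operator satisfies `[k, S k] = ∑ᵢ ∫ |[η_x^i, k]|² dμ`, so `J S` is a positive
operator bounded below by `a`; a positive element of a C⋆-algebra dominating a positive scalar is
invertible, and `S J = J (J S) J` inherits everything from `J S`. Replacing the family `η` by `A η`
replaces `S` by `A S A^[*]`, where `A^[*] = J A† J` is the Krein adjoint. For `A = R⁻¹` and
`A = Q⁻¹ J` this operator is `J` itself, and `[k, J k] = ‖k‖²` is the Parseval identity. -/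

open MeasureTheory
open scoped InnerProductSpace InnerProduct

theorem IsSelfAdjoint.of_mul_eq_one {R : Type*} [Monoid R] [StarMul R] {r s : R}
    (hr : IsSelfAdjoint r) (h : r * s = 1) : IsSelfAdjoint s :=
  left_inv_eq_right_inv (by rw [← hr.star_eq, ← star_mul, h, star_one]) h

theorem mul_mul_eq_one_of_mul_self_eq {R : Type*} [Monoid R] {r s t : R} (hr : r * r = t)
    (h₁ : r * s = 1) (h₂ : s * r = 1) : s * t * s = 1 := by
  rw [← hr, ← mul_assoc, h₂, one_mul, h₁]

theorem ContinuousLinearMap.isUnit_of_coercive {E : Type*} [NormedAddCommGroup E]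
    [InnerProductSpace ℂ E] [CompleteSpace E] {T : E →L[ℂ] E} (hT : IsSelfAdjoint T)
    {a : ℝ} (ha : 0 < a) (hcoer : ∀ x, a * ‖x‖ ^ 2 ≤ RCLike.re ⟪T x, x⟫_ℂ) : IsUnit T := by
  refine CStarAlgebra.isUnit_of_le (algebraMap ℝ _ a) ?_ (isStrictlyPositive_algebraMap ha)
  refine isPositive_def'.mpr ⟨hT.sub (.algebraMap _ (.all a)), fun x => ?_⟩
  rw [reApplyInnerSelf_apply, sub_apply, inner_sub_left, map_sub,
    Algebra.algebraMap_eq_smul_one, smul_apply, one_apply_eq_self,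
    RCLike.real_smul_eq_coe_smul (K := ℂ) a x, inner_smul_real_left, inner_self_eq_norm_sq_to_K]
  simpa [← Complex.ofReal_pow] using sub_nonneg.mpr (hcoer x)

section KreinFrame

variable {𝕜 K M ι : Type*} [RCLike 𝕜] [NormedAddCommGroup K] [InnerProductSpace 𝕜 K]
  [MeasurableSpace M] [Fintype ι]

noncomputable def kreinFrameSum (μ : Measure M) (J : K →L[𝕜] K) (η : ι → M → K) (k : K) : ℝ :=
  ∑ i, ∫ x, ‖⟪η i x, J k⟫_𝕜‖ ^ 2 ∂μ

def IsParsevalKreinFrame (μ : Measure M) (J : K →L[𝕜] K) (η : ι → M → K) : Prop :=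
  ∀ k, kreinFrameSum μ J η k = ‖k‖ ^ 2

def IsKreinFrameOperator (μ : Measure M) (J : K →L[𝕜] K) (η : ι → M → K) (S : K →L[𝕜] K) :
    Prop :=
  ∀ k₁ k₂ : K, ⟪k₁, J (S k₂)⟫_𝕜 = ∑ i, ∫ x, ⟪k₁, J (η i x)⟫_𝕜 * ⟪η i x, J k₂⟫_𝕜 ∂μ

namespace IsKreinFrameOperator

variable {μ : Measure M} {J : K →L[𝕜] K} {η : ι → M → K} {S : K →L[𝕜] K}

theorem inner_apply_self (hJ : J.IsSymmetric) (hS : IsKreinFrameOperator μ J η S) (k : K) :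
    ⟪k, J (S k)⟫_𝕜 = kreinFrameSum μ J η k := by
  have hJ : ∀ x y, ⟪J x, y⟫_𝕜 = ⟪x, J y⟫_𝕜 := hJ
  rw [hS, kreinFrameSum, RCLike.ofReal_sum]
  refine Finset.sum_congr rfl fun i _ => ?_
  rw [← integral_ofReal]
  congr 1 with x
  rw [← hJ, ← inner_conj_symm, RCLike.conj_mul]
  norm_cast

theorem isSymmetric_comp (hJ : J.IsSymmetric) (hS : IsKreinFrameOperator μ J η S) :
    (J ∘L S).IsSymmetric := by
  have hJ : ∀ x y, ⟪J x, y⟫_𝕜 = ⟪x, J y⟫_𝕜 := hJ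
  intro x y
  change ⟪J (S x), y⟫_𝕜 = ⟪x, J (S y)⟫_𝕜
  rw [← inner_conj_symm, hS, hS, map_sum]
  refine Finset.sum_congr rfl fun i _ => ?_
  rw [← integral_conj]
  congr 1 with z
  simp only [map_mul, inner_conj_symm, hJ, mul_comm]

theorem re_inner_comp_apply_self (hJ : J.IsSymmetric) (hS : IsKreinFrameOperator μ J η S)
    (k : K) : RCLike.re ⟪(J ∘L S) k, k⟫_𝕜 = kreinFrameSum μ J η k := by
  rw [ContinuousLinearMap.comp_apply, ← inner_conj_symm, RCLike.conj_re,
    hS.inner_apply_self hJ, RCLike.ofReal_re]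

theorem isPositive_comp (hJ : J.IsSymmetric) (hS : IsKreinFrameOperator μ J η S) :
    (J ∘L S).IsPositive := by
  refine ⟨hS.isSymmetric_comp hJ, fun x => ?_⟩
  rw [ContinuousLinearMap.reApplyInnerSelf_apply, hS.re_inner_comp_apply_self hJ]
  exact Finset.sum_nonneg fun i _ => integral_nonneg fun x => sq_nonneg _

theorem isParsevalKreinFrame (hJ : J.IsSymmetric) (hS : IsKreinFrameOperator μ J η S)
    (h : J ∘L S = 1) : IsParsevalKreinFrame μ J η := by
  intro k
  have := hS.inner_apply_self hJ k
  rw [← ContinuousLinearMap.comp_apply, h, one_apply_eq_self,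
    inner_self_eq_norm_sq_to_K] at this
  exact_mod_cast this.symm

variable [CompleteSpace K]

/-- The frame operator of `{A η_x^i}` is `A S A^[*]`, where `A^[*] = J A† J` is the Krein adjoint. -/
theorem map (hJ : J.IsSymmetric) (hJ2 : ∀ k, J (J k) = k) (hS : IsKreinFrameOperator μ J η S)
    (A : K →L[𝕜] K) :
    IsKreinFrameOperator μ J (fun i x => A (η i x)) (A ∘L S ∘L J ∘L A† ∘L J) := by
  have hJ : ∀ x y, ⟪J x, y⟫_𝕜 = ⟪x, J y⟫_𝕜 := hJ
  intro k₁ k₂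
  have h := hS (J ((A†) (J k₁))) (J ((A†) (J k₂)))
  simpa only [ContinuousLinearMap.comp_apply, hJ, hJ2, ContinuousLinearMap.adjoint_inner_left,
    ContinuousLinearMap.adjoint_inner_right] using h

theorem isParsevalKreinFrame_inv_sqrt (hJ : IsSelfAdjoint J) (hJ2 : ∀ k, J (J k) = k)
    (hS : IsKreinFrameOperator μ J η S) {R Rinv : K →L[𝕜] K} (hR : IsSelfAdjoint R)
    (hR2 : R ∘L R = S ∘L J) (hRr : R ∘L Rinv = 1) (hRl : Rinv ∘L R = 1) :
    IsParsevalKreinFrame μ J (fun i x => Rinv (η i x)) := by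
  simp only [← ContinuousLinearMap.mul_def] at hR2 hRr hRl
  have hJJ : J * J = 1 := ContinuousLinearMap.ext hJ2
  have hRinv : Rinv† = Rinv := (hR.of_mul_eq_one hRr).adjoint_eq
  refine (hS.map hJ.isSymmetric hJ2 Rinv).isParsevalKreinFrame hJ.isSymmetric ?_
  simp only [← ContinuousLinearMap.mul_def, hRinv]
  calc J * (Rinv * (S * (J * (Rinv * J)))) = J * (Rinv * (S * J) * Rinv) * J := by
        simp only [mul_assoc]
    _ = 1 := by rw [mul_mul_eq_one_of_mul_self_eq hR2 hRr hRl, mul_one, hJJ]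

theorem isParsevalKreinFrame_inv_sqrt_comp (hJ : IsSelfAdjoint J) (hJ2 : ∀ k, J (J k) = k)
    (hS : IsKreinFrameOperator μ J η S) {Q Qinv : K →L[𝕜] K} (hQ : IsSelfAdjoint Q)
    (hQ2 : Q ∘L Q = J ∘L S) (hQr : Q ∘L Qinv = 1) (hQl : Qinv ∘L Q = 1) :
    IsParsevalKreinFrame μ J (fun i x => Qinv (J (η i x))) := by
  simp only [← ContinuousLinearMap.mul_def] at hQ2 hQr hQl
  have hJJ : J * J = 1 := ContinuousLinearMap.ext hJ2
  have hQinv : Qinv† = Qinv := (hQ.of_mul_eq_one hQr).adjoint_eq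
  refine (hS.map hJ.isSymmetric hJ2 (Qinv ∘L J)).isParsevalKreinFrame hJ.isSymmetric ?_
  rw [ContinuousLinearMap.adjoint_comp, hQinv, hJ.adjoint_eq]
  simp only [← ContinuousLinearMap.mul_def]
  calc J * (Qinv * J * (S * (J * (J * Qinv * J)))) = J * (Qinv * (J * S) * Qinv) * J := by
        simp only [mul_assoc, ← mul_assoc J J, hJJ, one_mul]
    _ = 1 := by rw [mul_mul_eq_one_of_mul_self_eq hQ2 hQr hQl, mul_one, hJJ]

end IsKreinFrameOperator

end KreinFrame

theorem parseval_frames_from_sqrt_general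
    {K : Type*} [NormedAddCommGroup K] [InnerProductSpace ℂ K] [CompleteSpace K]
    (J : K →L[ℂ] K) (hJsa : IsSelfAdjoint J) (hJ2 : ∀ k : K, J (J k) = k)
    {M : Type*} [MeasurableSpace M] (μ : Measure M)
    (n : ℕ) (η : Fin n → M → K)
    (a b : ℝ) (ha : 0 < a)
    (hframe : ∀ k : K,
      a * ‖k‖ ^ 2 ≤ ∑ i : Fin n, ∫ x, ‖⟪η i x, J k⟫_ℂ‖ ^ 2 ∂μ ∧
      ∑ i : Fin n, ∫ x, ‖⟪η i x, J k⟫_ℂ‖ ^ 2 ∂μ ≤ b * ‖k‖ ^ 2)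
    (S : K →L[ℂ] K)
    (hS : ∀ k₁ k₂ : K,
      ⟪k₁, J (S k₂)⟫_ℂ = ∑ i : Fin n, ∫ x, ⟪k₁, J (η i x)⟫_ℂ * ⟪η i x, J k₂⟫_ℂ ∂μ) :
    (S ∘L J).IsPositive ∧ (J ∘L S).IsPositive ∧
    Function.Bijective (S ∘L J) ∧ Function.Bijective (J ∘L S) ∧
    (∀ R Rinv : K →L[ℂ] K, R.IsPositive → R ∘L R = S ∘L J →
      R ∘L Rinv = 1 → Rinv ∘L R = 1 →
      ∀ k : K, ∑ i : Fin n, ∫ x, ‖⟪Rinv (η i x), J k⟫_ℂ‖ ^ 2 ∂μ = ‖k‖ ^ 2) ∧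
    (∀ Q Qinv : K →L[ℂ] K, Q.IsPositive → Q ∘L Q = J ∘L S →
      Q ∘L Qinv = 1 → Qinv ∘L Q = 1 →
      ∀ k : K, ∑ i : Fin n, ∫ x, ‖⟪Qinv (J (η i x)), J k⟫_ℂ‖ ^ 2 ∂μ = ‖k‖ ^ 2) := by
  have hS : IsKreinFrameOperator μ J η S := hS
  have hJS : (J ∘L S).IsPositive := hS.isPositive_comp hJsa.isSymmetric
  have hJS_unit : IsUnit (J ∘L S) := ContinuousLinearMap.isUnit_of_coercive hJS.isSelfAdjoint ha
    fun k => (hS.re_inner_comp_apply_self hJsa.isSymmetric k).symm ▸ (hframe k).1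
  have hJ_bij : Function.Bijective J := Function.Involutive.bijective hJ2
  have hJS_bij : Function.Bijective (J ∘L S) := ContinuousLinearMap.isUnit_iff_bijective.mp hJS_unit
  have hSJ : S ∘L J = J ∘L (J ∘L S) ∘L J := by
    ext k
    simp [hJ2]
  refine ⟨?_, hJS, ?_, hJS_bij,
    fun R Rinv hR => hS.isParsevalKreinFrame_inv_sqrt hJsa hJ2 hR.isSelfAdjoint,
    fun Q Qinv hQ => hS.isParsevalKreinFrame_inv_sqrt_comp hJsa hJ2 hQ.isSelfAdjoint⟩
  · simpa only [hSJ, hJsa.adjoint_eq] using hJS.conj_adjoint J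
  · rw [hSJ]
    exact hJ_bij.comp (hJS_bij.comp hJ_bij)

/-- For a continuous frame `{η_x^i}` of rank `n` for the Krein space
`(K, [·,·])`, `[h,k] = ⟪h, J k⟫_ℂ`, with frame operator `S`, the operators `S∘J` and
`J∘S` are positive, self-adjoint and invertible; and if `R` (resp. `Q`) is the positive
invertible square root of `S∘J` (resp. `J∘S`) with inverse `R⁻¹` (resp. `Q⁻¹`), then
`{R⁻¹η_x^i}` and `{Q⁻¹Jη_x^i}` are Parseval continuous frames of rank `n` for `(K,[·,·])`. -/
theorem parseval_frames_from_sqrt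
    {K : Type*} [NormedAddCommGroup K] [InnerProductSpace ℂ K] [CompleteSpace K]
    (J : K →L[ℂ] K) (hJsa : IsSelfAdjoint J) (hJ2 : ∀ k : K, J (J k) = k)
    {M : Type*} [MeasurableSpace M] (μ : Measure M)
    (n : ℕ) (η : Fin n → M → K)
    (hmeas : ∀ (i : Fin n) (k : K), Measurable fun x : M => ⟪η i x, k⟫_ℂ)
    (a b : ℝ) (ha : 0 < a) (hab : a ≤ b)
    (hframe : ∀ k : K,
      a * ‖k‖ ^ 2 ≤ ∑ i : Fin n, ∫ x, ‖⟪η i x, J k⟫_ℂ‖ ^ 2 ∂μ ∧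
      ∑ i : Fin n, ∫ x, ‖⟪η i x, J k⟫_ℂ‖ ^ 2 ∂μ ≤ b * ‖k‖ ^ 2)
    (S : K →L[ℂ] K)
    (hS : ∀ k₁ k₂ : K,
      ⟪k₁, J (S k₂)⟫_ℂ = ∑ i : Fin n, ∫ x, ⟪k₁, J (η i x)⟫_ℂ * ⟪η i x, J k₂⟫_ℂ ∂μ) :
    (S ∘L J).IsPositive ∧ (J ∘L S).IsPositive ∧
    Function.Bijective (S ∘L J) ∧ Function.Bijective (J ∘L S) ∧
    (∀ R Rinv : K →L[ℂ] K, R.IsPositive → R ∘L R = S ∘L J →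
      R ∘L Rinv = 1 → Rinv ∘L R = 1 →
      ∀ k : K, ∑ i : Fin n, ∫ x, ‖⟪Rinv (η i x), J k⟫_ℂ‖ ^ 2 ∂μ = ‖k‖ ^ 2) ∧
    (∀ Q Qinv : K →L[ℂ] K, Q.IsPositive → Q ∘L Q = J ∘L S →
      Q ∘L Qinv = 1 → Qinv ∘L Q = 1 →
      ∀ k : K, ∑ i : Fin n, ∫ x, ‖⟪Qinv (J (η i x)), J k⟫_ℂ‖ ^ 2 ∂μ = ‖k‖ ^ 2) :=
  parseval_frames_from_sqrt_general J hJsa hJ2 μ n η a b ha hframe S hS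
end

section
/- (Reproducing kernel identity) Let K be a complex Hilbert space with fundamental symmetry J, [h,k] := ⟨h, J k⟩, let {η_x^1,…,η_x^n}_{x∈M} be a continuous frame of rank n for (K,[·,·]) with frame operator S (bijective with bounded inverse), and set K_{ij}(x,y) := [η_x^i, S⁻¹η_y^j]. Then for every k ∈ K, every x ∈ M and every i = 1,…,n: [η_x^i, k] = ∑_{j=1}^n ∫_M K_{ij}(x,y) · [η_y^j, k] dμ(y); moreover the kernel satisfies the symmetry conj(K_{ij}(x,y)) = K_{ji}(y,x) for all x, y ∈ M and i, j. -/
open MeasureTheory ComplexConjugate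
open scoped InnerProductSpace

/-!
The frame operator is self-adjoint for the Krein form `[u, v] = ⟪u, J v⟫`, because its defining
identity is invariant under conjugation; hence so is its inverse. Writing `h = S (S⁻¹ h)` and
moving `S` to the other side of `[·, ·]` turns the defining identity of `S` into the reproducing
formula, and the symmetry of the kernel is the Krein self-adjointness of `S⁻¹`.
-/

namespace Krein

variable {K : Type*} [NormedAddCommGroup K] [InnerProductSpace ℂ K] {J : K →L[ℂ] K}

def IsSelfAdjoint (J S : K →L[ℂ] K) : Prop :=
  ∀ u v : K, ⟪S u, J v⟫_ℂ = ⟪u, J (S v)⟫_ℂ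

def IsFrameOperator {M ι : Type*} [MeasurableSpace M] [Fintype ι]
    (J : K →L[ℂ] K) (μ : Measure M) (η : ι → M → K) (S : K →L[ℂ] K) : Prop :=
  ∀ u v : K, ⟪u, J (S v)⟫_ℂ = ∑ i, ∫ x, ⟪u, J (η i x)⟫_ℂ * ⟪η i x, J v⟫_ℂ ∂μ

theorem conj_inner_apply (hJ : (J : K →ₗ[ℂ] K).IsSymmetric) (u v : K) :
    conj ⟪u, J v⟫_ℂ = ⟪v, J u⟫_ℂ := by
  rw [inner_conj_symm]
  exact hJ v u

theorem IsSelfAdjoint.conj_inner_apply {S : K →L[ℂ] K} (hS : IsSelfAdjoint J S)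
    (hJ : (J : K →ₗ[ℂ] K).IsSymmetric) (u v : K) :
    conj ⟪u, J (S v)⟫_ℂ = ⟪v, J (S u)⟫_ℂ := by
  rw [Krein.conj_inner_apply hJ, hS]

theorem IsSelfAdjoint.of_rightInverse {S T : K →L[ℂ] K} (hS : IsSelfAdjoint J S)
    (hST : Function.RightInverse T S) : IsSelfAdjoint J T := by
  intro u v
  calc ⟪T u, J v⟫_ℂ = ⟪T u, J (S (T v))⟫_ℂ := by rw [hST v]
    _ = ⟪S (T u), J (T v)⟫_ℂ := (hS _ _).symm
    _ = ⟪u, J (T v)⟫_ℂ := by rw [hST u]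

section FrameOperator

variable {M ι : Type*} [MeasurableSpace M] [Fintype ι] {μ : Measure M} {η : ι → M → K}
  {S : K →L[ℂ] K}

theorem IsFrameOperator.isSelfAdjoint (hS : IsFrameOperator J μ η S)
    (hJ : (J : K →ₗ[ℂ] K).IsSymmetric) : IsSelfAdjoint J S := by
  intro u v
  rw [← Krein.conj_inner_apply hJ, hS, hS, map_sum]
  refine Finset.sum_congr rfl fun i _ => ?_
  rw [← integral_conj]
  congr 1 with x
  rw [map_mul, Krein.conj_inner_apply hJ, Krein.conj_inner_apply hJ, mul_comm]

theorem IsFrameOperator.inner_eq_sum_integral (hS : IsFrameOperator J μ η S)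
    (hJ : (J : K →ₗ[ℂ] K).IsSymmetric) {T : K →L[ℂ] K} (hST : Function.RightInverse T S) (h k : K) :
    ⟪h, J k⟫_ℂ = ∑ j, ∫ y, ⟪h, J (T (η j y))⟫_ℂ * ⟪η j y, J k⟫_ℂ ∂μ := by
  have hSsa := hS.isSelfAdjoint hJ
  have hTsa := hSsa.of_rightInverse hST
  calc ⟪h, J k⟫_ℂ = ⟪S (T h), J k⟫_ℂ := by rw [hST h]
    _ = ⟪T h, J (S k)⟫_ℂ := hSsa _ _
    _ = ∑ j, ∫ y, ⟪T h, J (η j y)⟫_ℂ * ⟪η j y, J k⟫_ℂ ∂μ := hS _ _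
    _ = ∑ j, ∫ y, ⟪h, J (T (η j y))⟫_ℂ * ⟪η j y, J k⟫_ℂ ∂μ := by simp only [hTsa _ _]

end FrameOperator

end Krein

theorem reproducing_kernel_identity_general
    {K : Type*} [NormedAddCommGroup K] [InnerProductSpace ℂ K] [CompleteSpace K]
    (J : K →L[ℂ] K) (hJsa : IsSelfAdjoint J)
    {M : Type*} [MeasurableSpace M] (μ : Measure M)
    (n : ℕ) (η : Fin n → M → K)
    (S : K →L[ℂ] K)
    (hS : ∀ k₁ k₂ : K,
      ⟪k₁, J (S k₂)⟫_ℂ = ∑ i : Fin n, ∫ x, ⟪k₁, J (η i x)⟫_ℂ * ⟪η i x, J k₂⟫_ℂ ∂μ)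
    (Sinv : K →L[ℂ] K) (hSinv₁ : S ∘L Sinv = 1) :
    (∀ (k : K) (x : M) (i : Fin n),
      ⟪η i x, J k⟫_ℂ =
        ∑ j : Fin n, ∫ y, ⟪η i x, J (Sinv (η j y))⟫_ℂ * ⟪η j y, J k⟫_ℂ ∂μ) ∧
    (∀ (x y : M) (i j : Fin n),
      conj ⟪η i x, J (Sinv (η j y))⟫_ℂ = ⟪η j y, J (Sinv (η i x))⟫_ℂ) := by
  have hJ := hJsa.isSymmetric
  have hframe : Krein.IsFrameOperator J μ η S := hS
  have hright : Function.RightInverse Sinv S := DFunLike.congr_fun hSinv₁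
  have hSinv := (hframe.isSelfAdjoint hJ).of_rightInverse hright
  exact ⟨fun k x i => hframe.inner_eq_sum_integral hJ hright (η i x) k,
    fun x y i j => hSinv.conj_inner_apply hJ _ _⟩

/-- **Reproducing kernel identity.** For a continuous frame `{η_x^i}` of
rank `n` for the Krein space `(K, [·,·])`, `[h,k] = ⟪h, J k⟫_ℂ`, with frame operator `S`
and bounded inverse `S⁻¹`, the kernel `K_{ij}(x,y) = [η_x^i, S⁻¹η_y^j]` reproduces the
analysis transforms: `[η_x^i, k] = ∑_j ∫ K_{ij}(x,y)·[η_y^j, k] dμ(y)`, and it satisfies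
the symmetry `conj (K_{ij}(x,y)) = K_{ji}(y,x)`. -/
theorem reproducing_kernel_identity
    {K : Type*} [NormedAddCommGroup K] [InnerProductSpace ℂ K] [CompleteSpace K]
    (J : K →L[ℂ] K) (hJsa : IsSelfAdjoint J) (hJ2 : ∀ k : K, J (J k) = k)
    {M : Type*} [MeasurableSpace M] (μ : Measure M)
    (n : ℕ) (η : Fin n → M → K)
    (hmeas : ∀ (i : Fin n) (k : K), Measurable fun x : M => ⟪η i x, k⟫_ℂ)
    (a b : ℝ) (ha : 0 < a) (hab : a ≤ b)
    (hframe : ∀ k : K,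
      a * ‖k‖ ^ 2 ≤ ∑ i : Fin n, ∫ x, ‖⟪η i x, J k⟫_ℂ‖ ^ 2 ∂μ ∧
      ∑ i : Fin n, ∫ x, ‖⟪η i x, J k⟫_ℂ‖ ^ 2 ∂μ ≤ b * ‖k‖ ^ 2)
    (S : K →L[ℂ] K)
    (hS : ∀ k₁ k₂ : K,
      ⟪k₁, J (S k₂)⟫_ℂ = ∑ i : Fin n, ∫ x, ⟪k₁, J (η i x)⟫_ℂ * ⟪η i x, J k₂⟫_ℂ ∂μ)
    (Sinv : K →L[ℂ] K) (hSinv₁ : S ∘L Sinv = 1) (hSinv₂ : Sinv ∘L S = 1) :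
    (∀ (k : K) (x : M) (i : Fin n),
      ⟪η i x, J k⟫_ℂ =
        ∑ j : Fin n, ∫ y, ⟪η i x, J (Sinv (η j y))⟫_ℂ * ⟪η j y, J k⟫_ℂ ∂μ) ∧
    (∀ (x y : M) (i j : Fin n),
      conj ⟪η i x, J (Sinv (η j y))⟫_ℂ = ⟪η j y, J (Sinv (η i x))⟫_ℂ) :=
  reproducing_kernel_identity_general J hJsa μ n η S hS Sinv hSinv₁
end

section
/- Let H be a complex Hilbert space and let W : H → H be a bounded self-adjoint injective operator with 0 in the spectrum of W, and let |W| denote the absolute value of W (the positive square root of W∘W). Suppose {η_x^1,…,η_x^n}_{x∈M} is a continuous frame of rank n for the Hilbert space H with respect to a measure space (M,𝔅,μ), i.e. there exist 0 < a ≤ b with a‖k‖² ≤ ∑_{i=1}^n ∫_M |⟨η_x^i, k⟩|² dμ(x) ≤ b‖k‖² for all k ∈ H. Then there is no constant c > 0 such that c·⟨k, |W| k⟩ ≤ ∑_{i=1}^n ∫_M |⟨η_x^i, W k⟩|² dμ(x) for all k ∈ H; in particular, no continuous frame for H is a continuous frame for the Krein space H_W determined by the non-regular Gram operator W. -/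
open MeasureTheory
open scoped InnerProductSpace

/-!
Since `|W|² = W²`, `‖|W| k‖ = ‖W k‖`, so the Bessel bound at `W k` turns the assumed lower bound
into `c ⟪k, |W| k⟫ ≤ b ‖|W| k‖²`, i.e. `c |W| ≤ b |W|²`. For `S = √|W|` this says that `S` is
bounded below on its range, which is dense because `S` is self-adjoint and injective. Hence `S` is
bounded below everywhere, so `|W| = S²` dominates a positive multiple of the identity and is
invertible; then so is `W`, since `W² = |W|²`, contradicting `0 ∈ σ(W)`.
-/

namespace ContinuousLinearMap

open RCLike

section RCLike

variable {𝕜 E : Type*} [RCLike 𝕜] [NormedAddCommGroup E] [InnerProductSpace 𝕜 E] [CompleteSpace E]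
  {S T : E →L[𝕜] E}

theorem _root_.IsSelfAdjoint.norm_sq_apply_eq_re_inner_comp_self (hS : IsSelfAdjoint S) (x : E) :
    ‖S x‖ ^ 2 = re ⟪x, (S ∘L S) x⟫_𝕜 := by
  simpa only [hS.adjoint_eq] using S.apply_norm_sq_eq_inner_adjoint_right x

theorem _root_.IsSelfAdjoint.norm_apply_eq_of_comp_self_eq (hS : IsSelfAdjoint S)
    (hT : IsSelfAdjoint T) (h : S ∘L S = T ∘L T) (x : E) : ‖S x‖ = ‖T x‖ := by
  have hsq : ‖S x‖ ^ 2 = ‖T x‖ ^ 2 := by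
    rw [hS.norm_sq_apply_eq_re_inner_comp_self, hT.norm_sq_apply_eq_re_inner_comp_self, h]
  exact (sq_eq_sq₀ (norm_nonneg _) (norm_nonneg _)).mp hsq

theorem _root_.IsSelfAdjoint.denseRange_of_injective (hS : IsSelfAdjoint S)
    (hinj : Function.Injective S) : DenseRange S := by
  have horth : S.rangeᗮ = ⊥ := by
    rw [S.orthogonal_range, hS.adjoint_eq, LinearMap.ker_eq_bot]
    exact hinj
  have hclosure := Submodule.topologicalClosure_eq_top_iff.mpr horth
  simpa [DenseRange, LinearMap.coe_range] using
    Submodule.dense_iff_topologicalClosure_eq_top.mpr hclosure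

end RCLike

variable {H : Type*} [NormedAddCommGroup H] [InnerProductSpace ℂ H] [CompleteSpace H]

theorem IsPositive.re_inner_eq_norm_sq_sqrt_apply {T : H →L[ℂ] H} (hT : T.IsPositive) (x : H) :
    re ⟪x, T x⟫_ℂ = ‖CFC.sqrt T x‖ ^ 2 := by
  have hT0 : 0 ≤ T := (nonneg_iff_isPositive T).mpr hT
  rw [(IsSelfAdjoint.of_nonneg (CFC.sqrt_nonneg T)).norm_sq_apply_eq_re_inner_comp_self,
    ← mul_def, CFC.sqrt_mul_sqrt_self T hT0]

theorem IsPositive.isUnit_of_re_inner_le_norm_sq {T : H →L[ℂ] H} (hT : T.IsPositive)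
    (hinj : Function.Injective T) {c B : ℝ} (hc : 0 < c)
    (h : ∀ k, c * re ⟪k, T k⟫_ℂ ≤ B * ‖T k‖ ^ 2) : IsUnit T := by
  set B' := max B 1
  have hB' : 0 < B' := lt_max_of_lt_right one_pos
  set S := CFC.sqrt T
  have hS : IsSelfAdjoint S := IsSelfAdjoint.of_nonneg (CFC.sqrt_nonneg T)
  have hSS : S ∘L S = T := CFC.sqrt_mul_sqrt_self T ((nonneg_iff_isPositive T).mpr hT)
  have hnorm := hT.re_inner_eq_norm_sq_sqrt_apply
  have hSinj : Function.Injective S := by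
    rw [← hSS, coe_comp] at hinj
    exact hinj.of_comp
  have hbelow : ∀ v, c * ‖v‖ ^ 2 ≤ B' * ‖S v‖ ^ 2 := by
    intro v
    refine (hS.denseRange_of_injective hSinj).induction_on v
      (isClosed_le (by fun_prop) (by fun_prop)) fun k => ?_
    calc c * ‖S k‖ ^ 2 = c * re ⟪k, T k⟫_ℂ := by rw [hnorm]
      _ ≤ B * ‖T k‖ ^ 2 := h k
      _ ≤ B' * ‖T k‖ ^ 2 := by gcongr; exact le_max_left B 1
      _ = B' * ‖S (S k)‖ ^ 2 := by rw [← hSS]; rfl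
  refine isUnit_of_forall_le_norm_inner_map T (c := ⟨c / B', (div_pos hc hB').le⟩)
    (NNReal.coe_pos.mp (div_pos hc hB')) fun x => ?_
  calc ‖x‖ ^ 2 * (c / B') = c * ‖x‖ ^ 2 / B' := by ring
    _ ≤ ‖S x‖ ^ 2 := (div_le_iff₀' hB').mpr (hbelow x)
    _ = re ⟪x, T x⟫_ℂ := (hnorm x).symm
    _ ≤ ‖⟪x, T x⟫_ℂ‖ := re_le_norm _
    _ = ‖⟪T x, x⟫_ℂ‖ := norm_inner_symm _ _

end ContinuousLinearMap

theorem no_frame_for_nonregular_Krein_general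
    {H : Type*} [NormedAddCommGroup H] [InnerProductSpace ℂ H] [CompleteSpace H]
    (W : H →L[ℂ] H) (hWsa : IsSelfAdjoint W) (hWinj : Function.Injective W)
    (hspec : (0 : ℂ) ∈ spectrum ℂ W)
    (absW : H →L[ℂ] H) (habs_pos : absW.IsPositive) (habs_sq : absW ∘L absW = W ∘L W)
    {M : Type*} [MeasurableSpace M] (μ : Measure M)
    (n : ℕ) (η : Fin n → M → H)
    (a b : ℝ)
    (hframe : ∀ k : H,
      a * ‖k‖ ^ 2 ≤ ∑ i : Fin n, ∫ x, ‖⟪η i x, k⟫_ℂ‖ ^ 2 ∂μ ∧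
      ∑ i : Fin n, ∫ x, ‖⟪η i x, k⟫_ℂ‖ ^ 2 ∂μ ≤ b * ‖k‖ ^ 2) :
    ¬ ∃ c : ℝ, 0 < c ∧ ∀ k : H,
        c * (⟪k, absW k⟫_ℂ).re ≤ ∑ i : Fin n, ∫ x, ‖⟪η i x, W k⟫_ℂ‖ ^ 2 ∂μ := by
  rintro ⟨c, hc, hlow⟩
  have hnorm := habs_pos.isSelfAdjoint.norm_apply_eq_of_comp_self_eq hWsa habs_sq
  have habs_inj : Function.Injective absW := by
    have hWW : Function.Injective (W ∘ W) := hWinj.comp hWinj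
    rw [← ContinuousLinearMap.coe_comp, ← habs_sq, ContinuousLinearMap.coe_comp] at hWW
    exact hWW.of_comp
  have habs_unit : IsUnit absW := habs_pos.isUnit_of_re_inner_le_norm_sq habs_inj hc fun k =>
    (hlow k).trans ((hframe (W k)).2.trans_eq (by rw [hnorm]))
  have hW_unit : IsUnit W := by
    rw [← isUnit_pow_iff two_ne_zero, sq, ContinuousLinearMap.mul_def, ← habs_sq]
    exact habs_unit.mul habs_unit
  exact (spectrum.zero_mem_iff ℂ).mp hspec hW_unit

/-- Let `W` be a bounded self-adjoint injective operator on a Hilbert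
space `H` with `0 ∈ spec(W)` (a non-regular Gram operator), and let `|W|` be its absolute
value (the positive square root of `W∘W`).  Then no continuous frame `{η_x^i}` of rank `n`
for the Hilbert space `H` admits a lower frame bound in the `W`-metric: there is no
`c > 0` with `c·⟪k, |W| k⟫ ≤ ∑_i ∫ |⟪η_x^i, W k⟫|² dμ` for all `k`; in particular, no
continuous frame for `H` is a continuous frame for the Krein space `H_W`. -/
theorem no_frame_for_nonregular_Krein
    {H : Type*} [NormedAddCommGroup H] [InnerProductSpace ℂ H] [CompleteSpace H]
    (W : H →L[ℂ] H) (hWsa : IsSelfAdjoint W) (hWinj : Function.Injective W)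
    (hspec : (0 : ℂ) ∈ spectrum ℂ W)
    (absW : H →L[ℂ] H) (habs_pos : absW.IsPositive) (habs_sq : absW ∘L absW = W ∘L W)
    {M : Type*} [MeasurableSpace M] (μ : Measure M)
    (n : ℕ) (η : Fin n → M → H)
    (hmeas : ∀ (i : Fin n) (k : H), Measurable fun x : M => ⟪η i x, k⟫_ℂ)
    (a b : ℝ) (ha : 0 < a) (hab : a ≤ b)
    (hframe : ∀ k : H,
      a * ‖k‖ ^ 2 ≤ ∑ i : Fin n, ∫ x, ‖⟪η i x, k⟫_ℂ‖ ^ 2 ∂μ ∧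
      ∑ i : Fin n, ∫ x, ‖⟪η i x, k⟫_ℂ‖ ^ 2 ∂μ ≤ b * ‖k‖ ^ 2) :
    ¬ ∃ c : ℝ, 0 < c ∧ ∀ k : H,
        c * (⟪k, absW k⟫_ℂ).re ≤ ∑ i : Fin n, ∫ x, ‖⟪η i x, W k⟫_ℂ‖ ^ 2 ∂μ :=
  no_frame_for_nonregular_Krein_general W hWsa hWinj hspec absW habs_pos habs_sq μ n η a b hframe
end

section
/- Let H be a complex Hilbert space and let W : H → H be a bounded self-adjoint injective operator, and let |W| be the absolute value of W (the positive square root of W∘W), so that N(k) := √⟨k, |W| k⟩ defines a norm on H. Then H is complete with respect to the norm N if and only if 0 is not in the spectrum of W. -/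
/-!
Write `S = √|W|`, so that `N k = ‖S k‖` and `S⁴ = W²`. Then `N`-completeness means exactly that the
range of `S` is closed, since `(H, N)` is isometric to `range S` through `S`. As `S` is
self-adjoint and injective, its range is dense, so it is closed iff `S` is onto, i.e. invertible.
Finally `S⁴ = W²` shows that `S` is invertible iff `W` is.
-/

open scoped InnerProductSpace
open Set Filter Topology Function

theorem isClosed_range_iff_forall_cauchySeq_comp {α β : Type*} [MetricSpace β] [CompleteSpace β]
    {f : α → β} :
    IsClosed (range f) ↔
      ∀ u : ℕ → α, CauchySeq (f ∘ u) → ∃ x, Tendsto (f ∘ u) atTop (𝓝 (f x)) := by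
  constructor
  · intro hclosed u hu
    obtain ⟨y, hy⟩ := cauchySeq_tendsto_of_complete hu
    obtain ⟨x, rfl⟩ := hclosed.mem_of_tendsto hy (Eventually.of_forall fun n => mem_range_self _)
    exact ⟨x, hy⟩
  · intro h
    refine IsSeqClosed.isClosed fun y l hy hyl => ?_
    choose u hu using hy
    have hfu : f ∘ u = y := funext hu
    obtain ⟨x, hx⟩ := h u (hfu ▸ hyl.cauchySeq)
    exact ⟨x, tendsto_nhds_unique (hfu ▸ hx) hyl⟩

namespace ContinuousLinearMap

variable {𝕜 E : Type*} [RCLike 𝕜] [NormedAddCommGroup E] [InnerProductSpace 𝕜 E] [CompleteSpace E]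

/-- The range of a self-adjoint injective operator is dense, being orthogonal to its kernel. -/
theorem isUnit_iff_isClosed_range_of_isSelfAdjoint {T : E →L[𝕜] E} (hT : IsSelfAdjoint T)
    (hinj : Injective T) : IsUnit T ↔ IsClosed (range T) := by
  refine ⟨fun hunit => (isUnit_iff_bijective.mp hunit).surjective.range_eq ▸ isClosed_univ,
    fun hclosed => isUnit_iff_bijective.mpr ⟨hinj, ?_⟩⟩
  have : CompleteSpace T.range := hclosed.completeSpace_coe
  have hrange : T.range = ⊤ := by
    rw [← Submodule.orthogonal_eq_bot_iff, orthogonal_range, hT.adjoint_eq]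
    exact LinearMap.ker_eq_bot.mpr hinj
  exact LinearMap.range_eq_top.mp hrange

end ContinuousLinearMap

theorem complete_J_norm_iff_regular_general
    {H : Type*} [NormedAddCommGroup H] [InnerProductSpace ℂ H] [CompleteSpace H]
    (W : H →L[ℂ] H) (hWinj : Function.Injective W)
    (absW : H →L[ℂ] H) (habs_pos : absW.IsPositive) (habs_sq : absW ∘L absW = W ∘L W)
    (N : H → ℝ) (hN : ∀ k : H, N k = Real.sqrt (⟪k, absW k⟫_ℂ).re) :
    ((∀ u : ℕ → H,
        (∀ ε : ℝ, 0 < ε → ∃ n₀ : ℕ, ∀ m ≥ n₀, ∀ n ≥ n₀, N (u m - u n) < ε) →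
        ∃ x : H, ∀ ε : ℝ, 0 < ε → ∃ n₀ : ℕ, ∀ n ≥ n₀, N (u n - x) < ε) ↔
      (0 : ℂ) ∉ spectrum ℂ W) := by
  have habs_nonneg : 0 ≤ absW := (ContinuousLinearMap.nonneg_iff_isPositive absW).mpr habs_pos
  set S := CFC.sqrt absW
  have hS_sq : S * S = absW := CFC.sqrt_mul_sqrt_self absW habs_nonneg
  have hS_sa : IsSelfAdjoint S := .of_nonneg (CFC.sqrt_nonneg absW)
  have hW_sq : W * W = S * S * (S * S) := by rw [hS_sq]; exact habs_sq.symm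
  have hS_inj : Injective S := by
    have hSSSS_inj : Injective (S * S * (S * S)) := hW_sq ▸ hWinj.comp hWinj
    exact hSSSS_inj.of_comp (f := S ∘ S ∘ S)
  have hW_unit : IsUnit W ↔ IsUnit S := by
    rw [← isUnit_mul_self_iff, hW_sq, isUnit_mul_self_iff, isUnit_mul_self_iff]
  have hN_eq : ∀ k, N k = ‖S k‖ := fun k => by
    rw [hN, S.apply_norm_eq_sqrt_inner_adjoint_right, hS_sa.adjoint_eq, ← hS_sq]
    rfl
  rw [spectrum.zero_notMem_iff, hW_unit,
    S.isUnit_iff_isClosed_range_of_isSelfAdjoint hS_sa hS_inj,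
    isClosed_range_iff_forall_cauchySeq_comp]
  simp only [Metric.cauchySeq_iff, Metric.tendsto_atTop, comp_apply, dist_eq_norm, ← map_sub,
    ← hN_eq, gt_iff_lt, ge_iff_le]

/-- Let `W` be a bounded self-adjoint injective operator on a complex
Hilbert space `H` and `|W|` its absolute value (the positive square root of `W∘W`), so
that `N k = √⟪k, |W| k⟫` is a norm on `H` (the `J`-norm of the `W`-metric space `H_W`).
Then `H` is (sequentially) complete with respect to `N` if and only if `0 ∉ spec(W)`. -/
theorem complete_J_norm_iff_regular
    {H : Type*} [NormedAddCommGroup H] [InnerProductSpace ℂ H] [CompleteSpace H]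
    (W : H →L[ℂ] H) (hWsa : IsSelfAdjoint W) (hWinj : Function.Injective W)
    (absW : H →L[ℂ] H) (habs_pos : absW.IsPositive) (habs_sq : absW ∘L absW = W ∘L W)
    (N : H → ℝ) (hN : ∀ k : H, N k = Real.sqrt (⟪k, absW k⟫_ℂ).re) :
    ((∀ u : ℕ → H,
        (∀ ε : ℝ, 0 < ε → ∃ n₀ : ℕ, ∀ m ≥ n₀, ∀ n ≥ n₀, N (u m - u n) < ε) →
        ∃ x : H, ∀ ε : ℝ, 0 < ε → ∃ n₀ : ℕ, ∀ n ≥ n₀, N (u n - x) < ε) ↔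
      (0 : ℂ) ∉ spectrum ℂ W) :=
  complete_J_norm_iff_regular_general W hWinj absW habs_pos habs_sq N hN
end
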